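/- Let G be a finite simple undirected graph on n vertices with adjacency matrix A_G, let r ≥ 1, and let k be an integer with 1 ≤ k ≤ 2r + 1. For each vertex v, let G_r^v be the subgraph of G induced on N_r^v = {u : d(v,u) ≤ r}. For each subgraph h of G, let ω_k(h) be the number of closed walks of length k in h that visit every vertex and every edge of h, and let D_h^(r) = {u ∈ V(h) : h ⊆ G_r^u} be its detector set. Then the k-th spectral moment of G admits the decentralized decomposition m_k(A_G) = (1/n) Σ_{v ∈ V(G)} Σ_{h ⊆ G_r^v, v ∈ V(h)} ω_k(h) / |D_h^(r)|, where the inner sum runs over all subgraphs h of G_r^v containing v with ω_k(h) > 0 (for each such h the detector set is nonempty, so the ratio is well defined). -/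

import Mathlib

open SimpleGraph

/-- A finite graph has only finitely many subgraphs. -/
instance subgraphFinite {V : Type*} [Finite V] {G : SimpleGraph V} : Finite G.Subgraph :=
  Finite.of_injective (fun h : G.Subgraph => (h.verts, h.Adj))
    (fun _ _ e => SimpleGraph.Subgraph.ext (congrArg Prod.fst e) (congrArg Prod.snd e))

/-- The number `ω_k(h)` of closed walks of length `k` in a simple graph `h` that visit
every vertex and traverse every edge of `h`. -/
noncomputable def spanningClosedWalkCount {U : Type*} (g : SimpleGraph U) (k : ℕ) : ℕ :=
  Nat.card {p : (u : U) × g.Walk u u // p.2.length = k ∧ p.2.toSubgraph = ⊤}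

/-- `G_r^v`: the subgraph of `G` induced on the `r`-th order neighborhood
`N_r^v = {u : d(v,u) ≤ r}` of `v` (the vertices reachable from `v` by a walk of
length at most `r`). -/
def ballSubgraph {V : Type*} (G : SimpleGraph V) (v : V) (r : ℕ) : G.Subgraph :=
  (⊤ : G.Subgraph).induce {u | ∃ p : G.Walk v u, p.length ≤ r}

/-- The detector set `D_h^(r) = {u ∈ V(h) : h ⊆ G_r^u}` of a subgraph `h` of `G`. -/
def detectorSet {V : Type*} {G : SimpleGraph V} (h : G.Subgraph) (r : ℕ) : Set V :=
  {u | u ∈ h.verts ∧ h ≤ ballSubgraph G u r}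

/-!
Closed walks of length `k` are partitioned by the subgraph they span, so
`trace (A_G ^ k) = Σ_h ω_k(h)`. If `ω_k(h) > 0`, some closed walk of length `k ≤ 2r + 1`
spans `h`; cutting it at any two of its vertices leaves an arc of length at most `r`, so every
vertex of `h` detects `h`. Splitting each `ω_k(h)` evenly among its (nonempty set of) detectors
and exchanging the two sums gives the decomposition.
-/

open Finset in
theorem sum_eq_sum_finsum_div_ncard {α β : Type*} [Fintype α] [Fintype β] (f : α → ℕ)
    (D : α → Set β) (hD : ∀ a, 0 < f a → (D a).Nonempty) :
    ∑ a, (f a : ℝ) = ∑ b, ∑ᶠ a : {a // b ∈ D a ∧ 0 < f a}, (f a : ℝ) / (D a).ncard := by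
  classical
  calc ∑ a, (f a : ℝ)
      = ∑ a with 0 < f a, (f a : ℝ) :=
        (sum_filter_of_ne fun a _ ha => Nat.pos_of_ne_zero (by exact_mod_cast ha)).symm
    _ = ∑ a with 0 < f a, ∑ _b ∈ (D a).toFinset, (f a : ℝ) / (D a).ncard := by
        refine sum_congr rfl fun a ha => ?_
        have hcard : ((D a).ncard : ℝ) ≠ 0 := by
          exact_mod_cast ((Set.ncard_pos (Set.toFinite _)).mpr (hD a (mem_filter.mp ha).2)).ne'
        rw [sum_const, nsmul_eq_mul, ← Set.ncard_eq_toFinset_card', mul_div_cancel₀ _ hcard]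
    _ = ∑ b, ∑ a with b ∈ D a ∧ 0 < f a, (f a : ℝ) / (D a).ncard :=
        sum_comm' fun a b => by simp [and_comm]
    _ = ∑ b, ∑ᶠ a : {a // b ∈ D a ∧ 0 < f a}, (f a : ℝ) / (D a).ncard := by
        refine sum_congr rfl fun b _ => ?_
        rw [finsum_eq_sum_of_fintype]
        exact sum_subtype _ (fun a => by simp) fun a => (f a : ℝ) / (D a).ncard

namespace SimpleGraph

variable {V : Type*} {G : SimpleGraph V}

theorem Subgraph.coeSubgraph_top (H : G.Subgraph) :
    Subgraph.coeSubgraph (⊤ : H.coe.Subgraph) = H :=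
  le_antisymm (Subgraph.coeSubgraph_le _) ⟨fun v hv => ⟨⟨v, hv⟩, trivial, rfl⟩,
    fun v w hvw => ⟨⟨v, H.edge_vert hvw⟩, ⟨w, H.edge_vert hvw.symm⟩, hvw, rfl, rfl⟩⟩

namespace Walk

theorem toSubgraph_map_hom_eq_iff {H : G.Subgraph} {u v : H.verts} (p : H.coe.Walk u v) :
    (p.map H.hom).toSubgraph = H ↔ p.toSubgraph = ⊤ := by
  rw [toSubgraph_map, ← (Subgraph.coeSubgraph_injective H).eq_iff, Subgraph.coeSubgraph_top]

theorem exists_map_hom_eq {H : G.Subgraph} {u v : V} (p : G.Walk u v) (hp : p.toSubgraph ≤ H)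
    (hu : u ∈ H.verts) (hv : v ∈ H.verts) : ∃ q : H.coe.Walk ⟨u, hu⟩ ⟨v, hv⟩, q.map H.hom = p :=
  ⟨p.mapToSubgraph.map (Subgraph.inclusion hp),
    (map_map _ _ _).trans p.map_mapToSubgraph_hom⟩

theorem exists_length_le_of_mem_support [DecidableEq V] {x u w : V} {r : ℕ} (c : G.Walk x x)
    (hc : c.length ≤ 2 * r + 1) (hu : u ∈ c.support) (hw : w ∈ c.support) :
    ∃ q : G.Walk u w, q.length ≤ r := by
  have hw' : w ∈ (c.rotate u hu).support := (mem_support_rotate_iff c u hu).mpr hw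
  have hsplit := congrArg length ((c.rotate u hu).take_spec hw')
  rw [length_append, length_rotate] at hsplit
  by_cases hle : ((c.rotate u hu).takeUntil w hw').length ≤ r
  · exact ⟨_, hle⟩
  · exact ⟨((c.rotate u hu).dropUntil w hw').reverse, by rw [length_reverse]; omega⟩

theorem toSubgraph_le_ballSubgraph [DecidableEq V] {x u : V} {r : ℕ} (c : G.Walk x x)
    (hc : c.length ≤ 2 * r + 1) (hu : u ∈ c.support) : c.toSubgraph ≤ ballSubgraph G u r :=
  Subgraph.le_induce_top_verts.trans <| Subgraph.induce_mono_right fun _ hw =>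
    c.exists_length_le_of_mem_support hc hu ((c.mem_verts_toSubgraph).mp hw)

end Walk

theorem detectorSet_eq_verts [DecidableEq V] {H : G.Subgraph} {r k : ℕ} (hk : k ≤ 2 * r + 1)
    (hpos : 0 < spanningClosedWalkCount H.coe k) : detectorSet H r = H.verts := by
  obtain ⟨⟨⟨⟨x, hx⟩, q⟩, hlen, htop⟩⟩ := (Nat.card_pos_iff.mp hpos).1
  have hq : (q.map H.hom).toSubgraph = H := (Walk.toSubgraph_map_hom_eq_iff q).mpr htop
  refine Set.Subset.antisymm (fun _ hu => hu.1) fun u hu => ⟨hu, hq.ge.trans ?_⟩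
  refine (q.map H.hom).toSubgraph_le_ballSubgraph
    (((Walk.length_map _ _).trans hlen).trans_le hk) ?_
  rwa [← Walk.mem_verts_toSubgraph, hq]

theorem detectorSet_nonempty [DecidableEq V] {H : G.Subgraph} {r k : ℕ} (hk : k ≤ 2 * r + 1)
    (hpos : 0 < spanningClosedWalkCount H.coe k) : (detectorSet H r).Nonempty := by
  obtain ⟨⟨⟨⟨x, hx⟩, _⟩, _⟩⟩ := (Nat.card_pos_iff.mp hpos).1
  exact ⟨x, (detectorSet_eq_verts hk hpos).ge hx⟩

theorem card_closedWalks_toSubgraph_eq_spanningClosedWalkCount (H : G.Subgraph) (k : ℕ) :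
    Nat.card {p : (u : V) × G.Walk u u // p.2.length = k ∧ p.2.toSubgraph = H}
      = spanningClosedWalkCount H.coe k := by
  refine (Nat.card_eq_of_bijective
    (fun q => ⟨⟨q.1.1, q.1.2.map H.hom⟩, (Walk.length_map _ _).trans q.2.1,
      (Walk.toSubgraph_map_hom_eq_iff _).mpr q.2.2⟩) ⟨?_, ?_⟩).symm
  · rintro ⟨⟨u₁, q₁⟩, _⟩ ⟨⟨u₂, q₂⟩, _⟩ heq
    obtain ⟨hu, hq⟩ := Sigma.mk.inj_iff.mp (congrArg Subtype.val heq)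
    obtain rfl : u₁ = u₂ := Subtype.ext hu
    obtain rfl : q₁ = q₂ :=
      Walk.map_injective_of_injective Subtype.val_injective _ _ (eq_of_heq hq)
    rfl
  · rintro ⟨⟨u, p⟩, hlen, hp⟩
    dsimp only at hlen hp
    have hu : u ∈ H.verts := hp ▸ p.start_mem_verts_toSubgraph
    obtain ⟨q, hq⟩ := p.exists_map_hom_eq hp.le hu hu
    subst hq
    exact ⟨⟨⟨_, q⟩, (Walk.length_map _ _).symm.trans hlen,
      (Walk.toSubgraph_map_hom_eq_iff q).mp hp⟩, rfl⟩

def closedWalksEquivSigma (k : ℕ) :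
    {p : (u : V) × G.Walk u u // p.2.length = k} ≃ Σ u, {q : G.Walk u u // q.length = k} where
  toFun p := ⟨p.1.1, p.1.2, p.2⟩
  invFun p := ⟨⟨p.1, p.2.1⟩, p.2.2⟩
  left_inv _ := rfl
  right_inv _ := rfl

variable [Fintype V] [DecidableEq V] [DecidableRel G.Adj]

theorem trace_adjMatrix_pow_eq_card_closedWalks (R : Type*) [Semiring R] (k : ℕ) :
    (G.adjMatrix R ^ k).trace = Nat.card {p : (u : V) × G.Walk u u // p.2.length = k} := by
  rw [Nat.card_congr (closedWalksEquivSigma k), Nat.card_sigma, Nat.cast_sum]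
  refine Finset.sum_congr rfl fun u _ => ?_
  rw [Matrix.diag_apply, adjMatrix_pow_apply_eq_card_walk, Nat.card_eq_fintype_card]
  rfl

theorem card_closedWalks_eq_sum_spanningClosedWalkCount (k : ℕ) :
    Nat.card {p : (u : V) × G.Walk u u // p.2.length = k}
      = ∑ H : G.Subgraph, spanningClosedWalkCount H.coe k := by
  have : Finite {p : (u : V) × G.Walk u u // p.2.length = k} :=
    .of_equiv _ (closedWalksEquivSigma k).symm
  rw [← Nat.card_congr (Equiv.sigmaFiberEquiv fun p => p.1.2.toSubgraph), Nat.card_sigma]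
  refine Finset.sum_congr rfl fun H _ => ?_
  rw [← card_closedWalks_toSubgraph_eq_spanningClosedWalkCount]
  exact Nat.card_congr (Equiv.subtypeSubtypeEquivSubtypeInter
    (fun p : (u : V) × G.Walk u u => p.2.length = k) fun p => p.2.toSubgraph = H)

end SimpleGraph

theorem decentralized_moment_computation_general
    {V : Type*} [Fintype V] [DecidableEq V] (G : SimpleGraph V) [DecidableRel G.Adj]
    (r k : ℕ) (hk2 : k ≤ 2 * r + 1) :
    (∀ (v : V) (h : G.Subgraph), h ≤ ballSubgraph G v r → v ∈ h.verts →
        0 < spanningClosedWalkCount h.coe k → (detectorSet h r).Nonempty)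
    ∧ (Fintype.card V : ℝ)⁻¹ * Matrix.trace (G.adjMatrix ℝ ^ k)
      = (Fintype.card V : ℝ)⁻¹
        * ∑ v : V,
            ∑ᶠ h : {h : G.Subgraph //
                h ≤ ballSubgraph G v r ∧ v ∈ h.verts ∧ 0 < spanningClosedWalkCount h.coe k},
              (spanningClosedWalkCount h.1.coe k : ℝ) / ((detectorSet h.1 r).ncard : ℝ) := by
  refine ⟨fun v h hle hv _ => ⟨v, hv, hle⟩, congrArg _ ?_⟩
  rw [trace_adjMatrix_pow_eq_card_closedWalks, card_closedWalks_eq_sum_spanningClosedWalkCount,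
    Nat.cast_sum, sum_eq_sum_finsum_div_ncard _ (detectorSet · r) fun _ => detectorSet_nonempty hk2]
  refine Finset.sum_congr rfl fun v _ => ?_
  have hP : (fun H : G.Subgraph => v ∈ detectorSet H r ∧ 0 < spanningClosedWalkCount H.coe k) =
      fun H => H ≤ ballSubgraph G v r ∧ v ∈ H.verts ∧ 0 < spanningClosedWalkCount H.coe k :=
    funext fun _ => propext <| and_assoc.trans and_left_comm
  rw [hP]

/-- For a finite simple graph `G` on `n` vertices, `r ≥ 1`, and
`1 ≤ k ≤ 2r + 1`, the `k`-th spectral moment admits the decentralized decomposition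
`m_k(A_G) = (1/n) Σ_{v} Σ_{h ⊆ G_r^v, v ∈ V(h), ω_k(h) > 0} ω_k(h) / |D_h^(r)|`;
moreover each such `h` has a nonempty detector set, so every ratio is well defined. -/
theorem decentralized_moment_computation
    {V : Type*} [Fintype V] [DecidableEq V] (G : SimpleGraph V) [DecidableRel G.Adj]
    (r k : ℕ) (hr : 1 ≤ r) (hk1 : 1 ≤ k) (hk2 : k ≤ 2 * r + 1) :
    (∀ (v : V) (h : G.Subgraph), h ≤ ballSubgraph G v r → v ∈ h.verts →
        0 < spanningClosedWalkCount h.coe k → (detectorSet h r).Nonempty)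
    ∧ (Fintype.card V : ℝ)⁻¹ * Matrix.trace (G.adjMatrix ℝ ^ k)
      = (Fintype.card V : ℝ)⁻¹
        * ∑ v : V,
            ∑ᶠ h : {h : G.Subgraph //
                h ≤ ballSubgraph G v r ∧ v ∈ h.verts ∧ 0 < spanningClosedWalkCount h.coe k},
              (spanningClosedWalkCount h.1.coe k : ℝ) / ((detectorSet h.1 r).ncard : ℝ) :=
  decentralized_moment_computation_general G r k hk2
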